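/- If p ∈ ℝ[x] satisfies p^k ∈ I for some ideal I ⊆ ℝ[x] and some k ∈ ℕ, then p + 1 is congruent modulo I to the square of the polynomial Σ_{i=0}^{k-1} C(1/2, i) p^i, where C(1/2, i) denotes the generalized binomial coefficient. In particular, the image of p + 1 in ℝ[x]/I is a square. -/

import Mathlib

open MvPolynomial Matrix
attribute [local instance] Matrix.frobeniusNormedAddCommGroup

noncomputable section

abbrev RP (n : ℕ) := MvPolynomial (Fin n) ℝ

/-- Evaluation of the linear pencil `A₀ + ∑ xᵢ Aᵢ` at a point `x ∈ ℝⁿ`. -/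
def pencilEval {n α : ℕ} (A0 : Matrix (Fin α) (Fin α) ℝ) (A : Fin n → Matrix (Fin α) (Fin α) ℝ)
    (x : Fin n → ℝ) : Matrix (Fin α) (Fin α) ℝ :=
  A0 + ∑ i, x i • A i

/-- The linear pencil `A₀ + ∑ xᵢ Aᵢ` as a matrix of polynomials. -/
def pencilPoly {n α : ℕ} (A0 : Matrix (Fin α) (Fin α) ℝ) (A : Fin n → Matrix (Fin α) (Fin α) ℝ) :
    Matrix (Fin α) (Fin α) (RP n) :=
  A0.map C + ∑ i, (X i : RP n) • (A i).map C

/-- `v^* M v` for a matrix of polynomials. -/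
def quadForm {n α : ℕ} (M : Matrix (Fin α) (Fin α) (RP n)) (v : Fin α → RP n) : RP n :=
  v ⬝ᵥ (M *ᵥ v)

/-- A sum of squares of polynomials. -/
def IsSos {n : ℕ} (p : RP n) : Prop := ∃ (k : ℕ) (q : Fin k → RP n), p = ∑ i, q i ^ 2

/-- An sos-matrix: a finite sum `∑ vⱼ vⱼ^*` with `vⱼ` vectors of polynomials. -/
def IsSosMatrix {n α : ℕ} (S : Matrix (Fin α) (Fin α) (RP n)) : Prop :=
  ∃ (k : ℕ) (v : Fin k → Fin α → RP n), S = ∑ j, Matrix.vecMulVec (v j) (v j)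

/-- Membership in the quadratic module `M_A` associated to the pencil. -/
def InQuadModule {n α : ℕ} (A0 : Matrix (Fin α) (Fin α) ℝ)
    (A : Fin n → Matrix (Fin α) (Fin α) ℝ) (p : RP n) : Prop :=
  ∃ s, IsSos s ∧ ∃ (k : ℕ) (v : Fin k → Fin α → RP n),
    p = s + ∑ j, quadForm (pencilPoly A0 A) (v j)

/-- Strong infeasibility: positive distance (Frobenius norm) between the range of the
pencil and the PSD cone. -/
def StronglyInfeasible {n α : ℕ} (A0 : Matrix (Fin α) (Fin α) ℝ)
    (A : Fin n → Matrix (Fin α) (Fin α) ℝ) : Prop :=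
  ∃ ε > (0:ℝ), ∀ (x : Fin n → ℝ) (B : Matrix (Fin α) (Fin α) ℝ), B.PosSemidef →
    ε ≤ dist (pencilEval A0 A x) B
/-- The generalized binomial coefficient `C(1/2, i) = (1/2)(1/2−1)⋯(1/2−i+1)/i!`. -/
def halfChoose (i : ℕ) : ℝ :=
  (∏ j ∈ Finset.range i, ((1:ℝ)/2 - j)) / (Nat.factorial i)

/-! The series `B = ∑ C(1/2, i) Xⁱ` is the binomial series of `(1 + X)^(1/2)`, so `B² = 1 + X`
by Vandermonde's identity. Truncation below degree `k` is multiplicative modulo `Xᵏ`, hence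
`Xᵏ ∣ 1 + X - (trunc k B)²` in `ℝ[X]`; substituting `X := p` gives
`pᵏ ∣ p + 1 - (∑_{i<k} C(1/2, i) pⁱ)²`. -/

section

open PowerSeries

lemma descPochhammer_smeval_half (i : ℕ) :
    (descPochhammer ℤ i).smeval ((1:ℝ)/2) = ∏ j ∈ Finset.range i, ((1:ℝ)/2 - j) := by
  induction i with
  | zero => simp [Polynomial.smeval_one]
  | succ m ih =>
    rw [descPochhammer_succ_right, Finset.prod_range_succ, ← ih]
    simp [Polynomial.smeval_mul, Polynomial.smeval_sub, Polynomial.smeval_X,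
      Polynomial.smeval_natCast]

lemma halfChoose_eq_choose (i : ℕ) : halfChoose i = Ring.choose ((1:ℝ)/2) i := by
  have h := Ring.descPochhammer_eq_factorial_smul_choose ((1:ℝ)/2) i
  rw [descPochhammer_smeval_half, nsmul_eq_mul] at h
  rw [halfChoose, h]
  field_simp

lemma binomialSeries_half_mul_self (A : Type*) [CommRing A] [Algebra ℝ A] :
    binomialSeries A ((1:ℝ)/2) * binomialSeries A ((1:ℝ)/2) = 1 + PowerSeries.X := by
  rw [← binomialSeries_add, add_halves, ← Nat.cast_one, binomialSeries_nat, pow_one]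

lemma Polynomial.X_pow_dvd_sub_of_trunc_eq {R : Type*} [CommRing R] {f g : Polynomial R} {k : ℕ}
    (h : trunc k (f : R⟦X⟧) = trunc k (g : R⟦X⟧)) : Polynomial.X ^ k ∣ f - g := by
  refine Polynomial.X_pow_dvd_iff.2 fun d hd => ?_
  have := congrArg (Polynomial.coeff · d) h
  simp only [coeff_trunc, if_pos hd, Polynomial.coeff_coe] at this
  rw [Polynomial.coeff_sub, this, sub_self]

lemma X_pow_dvd_one_add_X_sub_trunc_binomialSeries_half_sq (A : Type*) [CommRing A] [Algebra ℝ A]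
    (k : ℕ) :
    Polynomial.X ^ k ∣ 1 + Polynomial.X - trunc k (binomialSeries A ((1:ℝ)/2)) ^ 2 := by
  apply Polynomial.X_pow_dvd_sub_of_trunc_eq
  rw [sq, Polynomial.coe_mul, trunc_trunc_mul_trunc, binomialSeries_half_mul_self]
  simp

lemma aeval_trunc_binomialSeries_half {A : Type*} [CommRing A] [Algebra ℝ A] (a : A) (k : ℕ) :
    Polynomial.aeval a (trunc k (binomialSeries ℝ ((1:ℝ)/2))) =
      ∑ i ∈ Finset.range k, algebraMap ℝ A (halfChoose i) * a ^ i := by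
  simp [Polynomial.aeval_def, eval₂_trunc_eq_sum_range, halfChoose_eq_choose]

lemma pow_dvd_add_one_sub_sq_sum_halfChoose {A : Type*} [CommRing A] [Algebra ℝ A] (a : A)
    (k : ℕ) :
    a ^ k ∣ a + 1 - (∑ i ∈ Finset.range k, algebraMap ℝ A (halfChoose i) * a ^ i) ^ 2 := by
  obtain ⟨q, hq⟩ := X_pow_dvd_one_add_X_sub_trunc_binomialSeries_half_sq ℝ k
  refine ⟨Polynomial.aeval a q, ?_⟩
  rw [← aeval_trunc_binomialSeries_half]
  simpa [add_comm] using congrArg (Polynomial.aeval a) hq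

end

theorem stmt_14_general {n : ℕ} (I : Ideal (RP n)) (p : RP n) (k : ℕ)
    (hpk : p ^ k ∈ I) :
    p + 1 - (∑ i ∈ Finset.range k, C (halfChoose i) * p ^ i) ^ 2 ∈ I :=
  I.mem_of_dvd (pow_dvd_add_one_sub_sq_sum_halfChoose p k) hpk

/-- If `p^k ∈ I`, then `p + 1` is congruent mod `I` to the square of the truncated
binomial series `∑_{i<k} C(1/2,i) p^i`; in particular `p + 1` is a square mod `I`. -/
theorem stmt_14 {n : ℕ} (I : Ideal (RP n)) (p : RP n) (k : ℕ) (hk : 1 ≤ k)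
    (hpk : p ^ k ∈ I) :
    p + 1 - (∑ i ∈ Finset.range k, C (halfChoose i) * p ^ i) ^ 2 ∈ I :=
  stmt_14_general I p k hpk
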